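/- arXiv:math/9905160 — 3 statements merged into one kernel-verified Lean document; each statement's English description precedes it below -/
import Mathlib

section
/- The function W_3 defined on degree-3 chord diagrams by W_3 = 2 on the diagram where all three chords pairwise cross, W_3 = 1 on the diagram where exactly two pairs of chords cross (the 'chain' of three chords), and W_3 = 0 on all other degree-3 diagrams, satisfies the 1-term and 4-term relations, i.e., W_3 is a weight system of degree 3. -/
/- Chord diagrams of degree 3: fixed-point-free involutions (perfect matchings)
   of 4 cyclically ordered points, modelled as `ZMod 6`. -/

/-- `f` is a perfect matching (chord diagram structure) on the cyclically
ordered point set. -/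
def IsMatching3 (f : ZMod 6 → ZMod 6) : Prop :=
  (∀ x, f (f x) = x) ∧ ∀ x, f x ≠ x

/-- The chords through `a` and through `b` cross: exactly one of `b`, `f b`
lies strictly between `a` and `f a` in the cyclic order. -/
def Crossed3 (f : ZMod 6 → ZMod 6) (a b : ZMod 6) : Prop :=
  b ≠ a ∧ b ≠ f a ∧
    ¬(((0 < (b - a).val ∧ (b - a).val < (f a - a).val)) ↔
      ((0 < (f b - a).val ∧ (f b - a).val < (f a - a).val)))

/-- The chord through `a` is isolated: it crosses no other chord. -/
def Isolated3 (f : ZMod 6 → ZMod 6) (a : ZMod 6) : Prop :=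
  ∀ b, ¬ Crossed3 f a b

/-- 1-term relation: a weight system vanishes on diagrams with an isolated chord. -/
def OneTerm3 (W : (ZMod 6 → ZMod 6) → ℚ) : Prop :=
  ∀ f, IsMatching3 f → (∃ a, Isolated3 f a) → W f = 0

/-- Transposition of two points of the circle. -/
def swapF3 (a b : ZMod 6) : ZMod 6 → ZMod 6 :=
  fun x => if x = a then b else if x = b then a else x

/-- Slide permutation: moves the point `a + 1` (an endpoint of a chord) to the
position just after `b`, shifting intermediate points back by one; this realizes
moving one endpoint of a chord along the circle past everything between `a` and `b`. -/
def slideF3 (a b : ZMod 6) : ZMod 6 → ZMod 6 :=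
  fun x => if x = a + 1 then b else
    if (x - (a + 1)).val ≤ (b - (a + 1)).val then x - 1 else x

/-- Inverse of `slideF3 a b`. -/
def slideInvF3 (a b : ZMod 6) : ZMod 6 → ZMod 6 :=
  fun x => if x = b then a + 1 else
    if (x - (a + 1)).val < (b - (a + 1)).val then x + 1 else x

/-- Relabelling (conjugation) of a matching by a bijection of the circle
given together with its inverse. -/
def conjF3 (s sinv : ZMod 6 → ZMod 6) (f : ZMod 6 → ZMod 6) : ZMod 6 → ZMod 6 :=
  s ∘ f ∘ sinv

/-- 4-term relation: for a chord `{a, f a}` and a second chord with an endpoint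
at `a + 1` (just after `a`), the alternating sum over the four diagrams obtained
by placing that endpoint just after `a`, just before `a`, just after `f a` and
just before `f a` vanishes. -/
def FourTerm3 (W : (ZMod 6 → ZMod 6) → ℚ) : Prop :=
  ∀ f a, IsMatching3 f → f a ≠ a + 1 →
    W f - W (conjF3 (swapF3 a (a + 1)) (swapF3 a (a + 1)) f)
      + W (conjF3 (slideF3 a (f a)) (slideInvF3 a (f a)) f)
      - W (conjF3 (swapF3 (f a - 1) (f a)) (swapF3 (f a - 1) (f a))
            (conjF3 (slideF3 a (f a)) (slideInvF3 a (f a)) f)) = 0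


open scoped Classical in
/-- The number of unordered pairs of crossing chords of a matching. -/
noncomputable def crossCount3 (f : ZMod 6 → ZMod 6) : ℕ :=
  (Finset.univ.filter (fun p : ZMod 6 × ZMod 6 =>
    p.1.val < (f p.1).val ∧ p.2.val < (f p.2).val ∧ p.1.val < p.2.val ∧
      Crossed3 f p.1 p.2)).card

/-- The weight system `W₃`: 2 on the diagram whose three chords pairwise
cross, 1 on the chain diagram (exactly two crossing pairs), 0 otherwise. -/
noncomputable def W3 : (ZMod 6 → ZMod 6) → ℚ := fun f =>
  if crossCount3 f = 3 then 2 else if crossCount3 f = 2 then 1 else 0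

/-! ### Auxiliary machinery -/

instance (f : ZMod 6 → ZMod 6) : Decidable (IsMatching3 f) := by
  unfold IsMatching3; infer_instance
instance (f : ZMod 6 → ZMod 6) (a b : ZMod 6) : Decidable (Crossed3 f a b) := by
  unfold Crossed3; infer_instance
instance (f : ZMod 6 → ZMod 6) (a : ZMod 6) : Decidable (Isolated3 f a) := by
  unfold Isolated3; infer_instance

/-- Computable version of `crossCount3`. -/
def cc (f : ZMod 6 → ZMod 6) : ℕ :=
  (Finset.univ.filter (fun p : ZMod 6 × ZMod 6 =>
    p.1.val < (f p.1).val ∧ p.2.val < (f p.2).val ∧ p.1.val < p.2.val ∧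
      Crossed3 f p.1 p.2)).card

lemma cc_eq (f : ZMod 6 → ZMod 6) : crossCount3 f = cc f := by
  unfold crossCount3 cc
  congr 1
  ext p
  simp [Finset.mem_filter]

def fn' (v0 v1 v2 v3 v4 v5 : ZMod 6) : Fin 6 → ZMod 6
  | ⟨0,_⟩ => v0 | ⟨1,_⟩ => v1 | ⟨2,_⟩ => v2 | ⟨3,_⟩ => v3 | ⟨4,_⟩ => v4 | ⟨5,_⟩ => v5

/-- A function on `ZMod 6` given by its table of values. -/
def fn (v0 v1 v2 v3 v4 v5 : ZMod 6) : ZMod 6 → ZMod 6 := fun x =>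
  fn' v0 v1 v2 v3 v4 v5 x

lemma f_eq_fn (f : ZMod 6 → ZMod 6) : f = fn (f 0) (f 1) (f 2) (f 3) (f 4) (f 5) := by
  funext x; fin_cases x <;> rfl

lemma cases6 : ∀ y : ZMod 6, y = 0 ∨ y = 1 ∨ y = 2 ∨ y = 3 ∨ y = 4 ∨ y = 5 := by decide

lemma classify (f : ZMod 6 → ZMod 6) (h : IsMatching3 f) :
    f = fn 1 0 3 2 5 4 ∨
    f = fn 1 0 4 5 2 3 ∨
    f = fn 1 0 5 4 3 2 ∨
    f = fn 2 3 0 1 5 4 ∨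
    f = fn 2 4 0 5 1 3 ∨
    f = fn 2 5 0 4 3 1 ∨
    f = fn 3 2 1 0 5 4 ∨
    f = fn 3 4 5 0 1 2 ∨
    f = fn 3 5 4 0 2 1 ∨
    f = fn 4 2 1 5 0 3 ∨
    f = fn 4 3 5 1 0 2 ∨
    f = fn 4 5 3 2 0 1 ∨
    f = fn 5 2 1 4 3 0 ∨
    f = fn 5 3 4 1 2 0 ∨
    f = fn 5 4 3 2 1 0 := by
  obtain ⟨hi, hne⟩ := h
  rcases cases6 (f 0) with h0|h0|h0|h0|h0|h0
  · exact absurd h0 (hne 0)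
  · have h1 : f 1 = 0 := by rw [← h0]; exact hi 0
    rcases cases6 (f 2) with h2|h2|h2|h2|h2|h2
    · have hx := hi 2
      rw [h2, h0] at hx
      exact absurd hx (by decide)
    · have hx := hi 2
      rw [h2, h1] at hx
      exact absurd hx (by decide)
    · exact absurd h2 (hne 2)
    · have h3 : f 3 = 2 := by rw [← h2]; exact hi 2
      rcases cases6 (f 4) with h4|h4|h4|h4|h4|h4
      · have hx := hi 4
        rw [h4, h0] at hx
        exact absurd hx (by decide)
      · have hx := hi 4
        rw [h4, h1] at hx
        exact absurd hx (by decide)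
      · have hx := hi 4
        rw [h4, h2] at hx
        exact absurd hx (by decide)
      · have hx := hi 4
        rw [h4, h3] at hx
        exact absurd hx (by decide)
      · exact absurd h4 (hne 4)
      · have h5 : f 5 = 4 := by rw [← h4]; exact hi 4
        have hF : f = fn 1 0 3 2 5 4 := by rw [f_eq_fn f, h0, h1, h2, h3, h4, h5]
        exact Or.inl hF
    · have h4 : f 4 = 2 := by rw [← h2]; exact hi 2
      rcases cases6 (f 3) with h3|h3|h3|h3|h3|h3
      · have hx := hi 3
        rw [h3, h0] at hx
        exact absurd hx (by decide)
      · have hx := hi 3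
        rw [h3, h1] at hx
        exact absurd hx (by decide)
      · have hx := hi 3
        rw [h3, h2] at hx
        exact absurd hx (by decide)
      · exact absurd h3 (hne 3)
      · have hx := hi 3
        rw [h3, h4] at hx
        exact absurd hx (by decide)
      · have h5 : f 5 = 3 := by rw [← h3]; exact hi 3
        have hF : f = fn 1 0 4 5 2 3 := by rw [f_eq_fn f, h0, h1, h2, h3, h4, h5]
        exact Or.inr (Or.inl hF)
    · have h5 : f 5 = 2 := by rw [← h2]; exact hi 2
      rcases cases6 (f 3) with h3|h3|h3|h3|h3|h3
      · have hx := hi 3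
        rw [h3, h0] at hx
        exact absurd hx (by decide)
      · have hx := hi 3
        rw [h3, h1] at hx
        exact absurd hx (by decide)
      · have hx := hi 3
        rw [h3, h2] at hx
        exact absurd hx (by decide)
      · exact absurd h3 (hne 3)
      · have h4 : f 4 = 3 := by rw [← h3]; exact hi 3
        have hF : f = fn 1 0 5 4 3 2 := by rw [f_eq_fn f, h0, h1, h2, h3, h4, h5]
        exact Or.inr (Or.inr (Or.inl hF))
      · have hx := hi 3
        rw [h3, h5] at hx
        exact absurd hx (by decide)
  · have h2 : f 2 = 0 := by rw [← h0]; exact hi 0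
    rcases cases6 (f 1) with h1|h1|h1|h1|h1|h1
    · have hx := hi 1
      rw [h1, h0] at hx
      exact absurd hx (by decide)
    · exact absurd h1 (hne 1)
    · have hx := hi 1
      rw [h1, h2] at hx
      exact absurd hx (by decide)
    · have h3 : f 3 = 1 := by rw [← h1]; exact hi 1
      rcases cases6 (f 4) with h4|h4|h4|h4|h4|h4
      · have hx := hi 4
        rw [h4, h0] at hx
        exact absurd hx (by decide)
      · have hx := hi 4
        rw [h4, h1] at hx
        exact absurd hx (by decide)
      · have hx := hi 4
        rw [h4, h2] at hx
        exact absurd hx (by decide)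
      · have hx := hi 4
        rw [h4, h3] at hx
        exact absurd hx (by decide)
      · exact absurd h4 (hne 4)
      · have h5 : f 5 = 4 := by rw [← h4]; exact hi 4
        have hF : f = fn 2 3 0 1 5 4 := by rw [f_eq_fn f, h0, h1, h2, h3, h4, h5]
        exact Or.inr (Or.inr (Or.inr (Or.inl hF)))
    · have h4 : f 4 = 1 := by rw [← h1]; exact hi 1
      rcases cases6 (f 3) with h3|h3|h3|h3|h3|h3
      · have hx := hi 3
        rw [h3, h0] at hx
        exact absurd hx (by decide)
      · have hx := hi 3
        rw [h3, h1] at hx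
        exact absurd hx (by decide)
      · have hx := hi 3
        rw [h3, h2] at hx
        exact absurd hx (by decide)
      · exact absurd h3 (hne 3)
      · have hx := hi 3
        rw [h3, h4] at hx
        exact absurd hx (by decide)
      · have h5 : f 5 = 3 := by rw [← h3]; exact hi 3
        have hF : f = fn 2 4 0 5 1 3 := by rw [f_eq_fn f, h0, h1, h2, h3, h4, h5]
        exact Or.inr (Or.inr (Or.inr (Or.inr (Or.inl hF))))
    · have h5 : f 5 = 1 := by rw [← h1]; exact hi 1
      rcases cases6 (f 3) with h3|h3|h3|h3|h3|h3
      · have hx := hi 3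
        rw [h3, h0] at hx
        exact absurd hx (by decide)
      · have hx := hi 3
        rw [h3, h1] at hx
        exact absurd hx (by decide)
      · have hx := hi 3
        rw [h3, h2] at hx
        exact absurd hx (by decide)
      · exact absurd h3 (hne 3)
      · have h4 : f 4 = 3 := by rw [← h3]; exact hi 3
        have hF : f = fn 2 5 0 4 3 1 := by rw [f_eq_fn f, h0, h1, h2, h3, h4, h5]
        exact Or.inr (Or.inr (Or.inr (Or.inr (Or.inr (Or.inl hF)))))
      · have hx := hi 3
        rw [h3, h5] at hx
        exact absurd hx (by decide)
  · have h3 : f 3 = 0 := by rw [← h0]; exact hi 0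
    rcases cases6 (f 1) with h1|h1|h1|h1|h1|h1
    · have hx := hi 1
      rw [h1, h0] at hx
      exact absurd hx (by decide)
    · exact absurd h1 (hne 1)
    · have h2 : f 2 = 1 := by rw [← h1]; exact hi 1
      rcases cases6 (f 4) with h4|h4|h4|h4|h4|h4
      · have hx := hi 4
        rw [h4, h0] at hx
        exact absurd hx (by decide)
      · have hx := hi 4
        rw [h4, h1] at hx
        exact absurd hx (by decide)
      · have hx := hi 4
        rw [h4, h2] at hx
        exact absurd hx (by decide)
      · have hx := hi 4
        rw [h4, h3] at hx
        exact absurd hx (by decide)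
      · exact absurd h4 (hne 4)
      · have h5 : f 5 = 4 := by rw [← h4]; exact hi 4
        have hF : f = fn 3 2 1 0 5 4 := by rw [f_eq_fn f, h0, h1, h2, h3, h4, h5]
        exact Or.inr (Or.inr (Or.inr (Or.inr (Or.inr (Or.inr (Or.inl hF))))))
    · have hx := hi 1
      rw [h1, h3] at hx
      exact absurd hx (by decide)
    · have h4 : f 4 = 1 := by rw [← h1]; exact hi 1
      rcases cases6 (f 2) with h2|h2|h2|h2|h2|h2
      · have hx := hi 2
        rw [h2, h0] at hx
        exact absurd hx (by decide)
      · have hx := hi 2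
        rw [h2, h1] at hx
        exact absurd hx (by decide)
      · exact absurd h2 (hne 2)
      · have hx := hi 2
        rw [h2, h3] at hx
        exact absurd hx (by decide)
      · have hx := hi 2
        rw [h2, h4] at hx
        exact absurd hx (by decide)
      · have h5 : f 5 = 2 := by rw [← h2]; exact hi 2
        have hF : f = fn 3 4 5 0 1 2 := by rw [f_eq_fn f, h0, h1, h2, h3, h4, h5]
        exact Or.inr (Or.inr (Or.inr (Or.inr (Or.inr (Or.inr (Or.inr (Or.inl hF)))))))
    · have h5 : f 5 = 1 := by rw [← h1]; exact hi 1
      rcases cases6 (f 2) with h2|h2|h2|h2|h2|h2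
      · have hx := hi 2
        rw [h2, h0] at hx
        exact absurd hx (by decide)
      · have hx := hi 2
        rw [h2, h1] at hx
        exact absurd hx (by decide)
      · exact absurd h2 (hne 2)
      · have hx := hi 2
        rw [h2, h3] at hx
        exact absurd hx (by decide)
      · have h4 : f 4 = 2 := by rw [← h2]; exact hi 2
        have hF : f = fn 3 5 4 0 2 1 := by rw [f_eq_fn f, h0, h1, h2, h3, h4, h5]
        exact Or.inr (Or.inr (Or.inr (Or.inr (Or.inr (Or.inr (Or.inr (Or.inr (Or.inl hF))))))))
      · have hx := hi 2
        rw [h2, h5] at hx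
        exact absurd hx (by decide)
  · have h4 : f 4 = 0 := by rw [← h0]; exact hi 0
    rcases cases6 (f 1) with h1|h1|h1|h1|h1|h1
    · have hx := hi 1
      rw [h1, h0] at hx
      exact absurd hx (by decide)
    · exact absurd h1 (hne 1)
    · have h2 : f 2 = 1 := by rw [← h1]; exact hi 1
      rcases cases6 (f 3) with h3|h3|h3|h3|h3|h3
      · have hx := hi 3
        rw [h3, h0] at hx
        exact absurd hx (by decide)
      · have hx := hi 3
        rw [h3, h1] at hx
        exact absurd hx (by decide)
      · have hx := hi 3
        rw [h3, h2] at hx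
        exact absurd hx (by decide)
      · exact absurd h3 (hne 3)
      · have hx := hi 3
        rw [h3, h4] at hx
        exact absurd hx (by decide)
      · have h5 : f 5 = 3 := by rw [← h3]; exact hi 3
        have hF : f = fn 4 2 1 5 0 3 := by rw [f_eq_fn f, h0, h1, h2, h3, h4, h5]
        exact Or.inr (Or.inr (Or.inr (Or.inr (Or.inr (Or.inr (Or.inr (Or.inr (Or.inr (Or.inl hF)))))))))
    · have h3 : f 3 = 1 := by rw [← h1]; exact hi 1
      rcases cases6 (f 2) with h2|h2|h2|h2|h2|h2
      · have hx := hi 2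
        rw [h2, h0] at hx
        exact absurd hx (by decide)
      · have hx := hi 2
        rw [h2, h1] at hx
        exact absurd hx (by decide)
      · exact absurd h2 (hne 2)
      · have hx := hi 2
        rw [h2, h3] at hx
        exact absurd hx (by decide)
      · have hx := hi 2
        rw [h2, h4] at hx
        exact absurd hx (by decide)
      · have h5 : f 5 = 2 := by rw [← h2]; exact hi 2
        have hF : f = fn 4 3 5 1 0 2 := by rw [f_eq_fn f, h0, h1, h2, h3, h4, h5]
        exact Or.inr (Or.inr (Or.inr (Or.inr (Or.inr (Or.inr (Or.inr (Or.inr (Or.inr (Or.inr (Or.inl hF))))))))))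
    · have hx := hi 1
      rw [h1, h4] at hx
      exact absurd hx (by decide)
    · have h5 : f 5 = 1 := by rw [← h1]; exact hi 1
      rcases cases6 (f 2) with h2|h2|h2|h2|h2|h2
      · have hx := hi 2
        rw [h2, h0] at hx
        exact absurd hx (by decide)
      · have hx := hi 2
        rw [h2, h1] at hx
        exact absurd hx (by decide)
      · exact absurd h2 (hne 2)
      · have h3 : f 3 = 2 := by rw [← h2]; exact hi 2
        have hF : f = fn 4 5 3 2 0 1 := by rw [f_eq_fn f, h0, h1, h2, h3, h4, h5]
        exact Or.inr (Or.inr (Or.inr (Or.inr (Or.inr (Or.inr (Or.inr (Or.inr (Or.inr (Or.inr (Or.inr (Or.inl hF)))))))))))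
      · have hx := hi 2
        rw [h2, h4] at hx
        exact absurd hx (by decide)
      · have hx := hi 2
        rw [h2, h5] at hx
        exact absurd hx (by decide)
  · have h5 : f 5 = 0 := by rw [← h0]; exact hi 0
    rcases cases6 (f 1) with h1|h1|h1|h1|h1|h1
    · have hx := hi 1
      rw [h1, h0] at hx
      exact absurd hx (by decide)
    · exact absurd h1 (hne 1)
    · have h2 : f 2 = 1 := by rw [← h1]; exact hi 1
      rcases cases6 (f 3) with h3|h3|h3|h3|h3|h3
      · have hx := hi 3
        rw [h3, h0] at hx
        exact absurd hx (by decide)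
      · have hx := hi 3
        rw [h3, h1] at hx
        exact absurd hx (by decide)
      · have hx := hi 3
        rw [h3, h2] at hx
        exact absurd hx (by decide)
      · exact absurd h3 (hne 3)
      · have h4 : f 4 = 3 := by rw [← h3]; exact hi 3
        have hF : f = fn 5 2 1 4 3 0 := by rw [f_eq_fn f, h0, h1, h2, h3, h4, h5]
        exact Or.inr (Or.inr (Or.inr (Or.inr (Or.inr (Or.inr (Or.inr (Or.inr (Or.inr (Or.inr (Or.inr (Or.inr (Or.inl hF))))))))))))
      · have hx := hi 3
        rw [h3, h5] at hx
        exact absurd hx (by decide)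
    · have h3 : f 3 = 1 := by rw [← h1]; exact hi 1
      rcases cases6 (f 2) with h2|h2|h2|h2|h2|h2
      · have hx := hi 2
        rw [h2, h0] at hx
        exact absurd hx (by decide)
      · have hx := hi 2
        rw [h2, h1] at hx
        exact absurd hx (by decide)
      · exact absurd h2 (hne 2)
      · have hx := hi 2
        rw [h2, h3] at hx
        exact absurd hx (by decide)
      · have h4 : f 4 = 2 := by rw [← h2]; exact hi 2
        have hF : f = fn 5 3 4 1 2 0 := by rw [f_eq_fn f, h0, h1, h2, h3, h4, h5]
        exact Or.inr (Or.inr (Or.inr (Or.inr (Or.inr (Or.inr (Or.inr (Or.inr (Or.inr (Or.inr (Or.inr (Or.inr (Or.inr (Or.inl hF)))))))))))))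
      · have hx := hi 2
        rw [h2, h5] at hx
        exact absurd hx (by decide)
    · have h4 : f 4 = 1 := by rw [← h1]; exact hi 1
      rcases cases6 (f 2) with h2|h2|h2|h2|h2|h2
      · have hx := hi 2
        rw [h2, h0] at hx
        exact absurd hx (by decide)
      · have hx := hi 2
        rw [h2, h1] at hx
        exact absurd hx (by decide)
      · exact absurd h2 (hne 2)
      · have h3 : f 3 = 2 := by rw [← h2]; exact hi 2
        have hF : f = fn 5 4 3 2 1 0 := by rw [f_eq_fn f, h0, h1, h2, h3, h4, h5]
        exact Or.inr (Or.inr (Or.inr (Or.inr (Or.inr (Or.inr (Or.inr (Or.inr (Or.inr (Or.inr (Or.inr (Or.inr (Or.inr (Or.inr (hF))))))))))))))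
      · have hx := hi 2
        rw [h2, h4] at hx
        exact absurd hx (by decide)
      · have hx := hi 2
        rw [h2, h5] at hx
        exact absurd hx (by decide)
    · have hx := hi 1
      rw [h1, h5] at hx
      exact absurd hx (by decide)


/-- Integer version of the weight values. -/
def z : ℕ → ℤ := fun n => if n = 3 then 2 else if n = 2 then 1 else 0

lemma W3_eq (f : ZMod 6 → ZMod 6) : W3 f = ((z (cc f) : ℤ) : ℚ) := by
  rw [W3, cc_eq, z]
  split_ifs <;> norm_num
set_option maxRecDepth 4000 in
set_option maxHeartbeats 1000000 in
lemma ot0 : (∃ a, Isolated3 (fn 1 0 3 2 5 4) a) → cc (fn 1 0 3 2 5 4) ≠ 3 ∧ cc (fn 1 0 3 2 5 4) ≠ 2 := by decide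

set_option maxRecDepth 4000 in
set_option maxHeartbeats 1000000 in
lemma ot1 : (∃ a, Isolated3 (fn 1 0 4 5 2 3) a) → cc (fn 1 0 4 5 2 3) ≠ 3 ∧ cc (fn 1 0 4 5 2 3) ≠ 2 := by decide

set_option maxRecDepth 4000 in
set_option maxHeartbeats 1000000 in
lemma ot2 : (∃ a, Isolated3 (fn 1 0 5 4 3 2) a) → cc (fn 1 0 5 4 3 2) ≠ 3 ∧ cc (fn 1 0 5 4 3 2) ≠ 2 := by decide

set_option maxRecDepth 4000 in
set_option maxHeartbeats 1000000 in
lemma ot3 : (∃ a, Isolated3 (fn 2 3 0 1 5 4) a) → cc (fn 2 3 0 1 5 4) ≠ 3 ∧ cc (fn 2 3 0 1 5 4) ≠ 2 := by decide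

set_option maxRecDepth 4000 in
set_option maxHeartbeats 1000000 in
lemma ot4 : (∃ a, Isolated3 (fn 2 4 0 5 1 3) a) → cc (fn 2 4 0 5 1 3) ≠ 3 ∧ cc (fn 2 4 0 5 1 3) ≠ 2 := by decide

set_option maxRecDepth 4000 in
set_option maxHeartbeats 1000000 in
lemma ot5 : (∃ a, Isolated3 (fn 2 5 0 4 3 1) a) → cc (fn 2 5 0 4 3 1) ≠ 3 ∧ cc (fn 2 5 0 4 3 1) ≠ 2 := by decide

set_option maxRecDepth 4000 in
set_option maxHeartbeats 1000000 in
lemma ot6 : (∃ a, Isolated3 (fn 3 2 1 0 5 4) a) → cc (fn 3 2 1 0 5 4) ≠ 3 ∧ cc (fn 3 2 1 0 5 4) ≠ 2 := by decide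

set_option maxRecDepth 4000 in
set_option maxHeartbeats 1000000 in
lemma ot7 : (∃ a, Isolated3 (fn 3 4 5 0 1 2) a) → cc (fn 3 4 5 0 1 2) ≠ 3 ∧ cc (fn 3 4 5 0 1 2) ≠ 2 := by decide

set_option maxRecDepth 4000 in
set_option maxHeartbeats 1000000 in
lemma ot8 : (∃ a, Isolated3 (fn 3 5 4 0 2 1) a) → cc (fn 3 5 4 0 2 1) ≠ 3 ∧ cc (fn 3 5 4 0 2 1) ≠ 2 := by decide

set_option maxRecDepth 4000 in
set_option maxHeartbeats 1000000 in
lemma ot9 : (∃ a, Isolated3 (fn 4 2 1 5 0 3) a) → cc (fn 4 2 1 5 0 3) ≠ 3 ∧ cc (fn 4 2 1 5 0 3) ≠ 2 := by decide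

set_option maxRecDepth 4000 in
set_option maxHeartbeats 1000000 in
lemma ot10 : (∃ a, Isolated3 (fn 4 3 5 1 0 2) a) → cc (fn 4 3 5 1 0 2) ≠ 3 ∧ cc (fn 4 3 5 1 0 2) ≠ 2 := by decide

set_option maxRecDepth 4000 in
set_option maxHeartbeats 1000000 in
lemma ot11 : (∃ a, Isolated3 (fn 4 5 3 2 0 1) a) → cc (fn 4 5 3 2 0 1) ≠ 3 ∧ cc (fn 4 5 3 2 0 1) ≠ 2 := by decide

set_option maxRecDepth 4000 in
set_option maxHeartbeats 1000000 in
lemma ot12 : (∃ a, Isolated3 (fn 5 2 1 4 3 0) a) → cc (fn 5 2 1 4 3 0) ≠ 3 ∧ cc (fn 5 2 1 4 3 0) ≠ 2 := by decide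

set_option maxRecDepth 4000 in
set_option maxHeartbeats 1000000 in
lemma ot13 : (∃ a, Isolated3 (fn 5 3 4 1 2 0) a) → cc (fn 5 3 4 1 2 0) ≠ 3 ∧ cc (fn 5 3 4 1 2 0) ≠ 2 := by decide

set_option maxRecDepth 4000 in
set_option maxHeartbeats 1000000 in
lemma ot14 : (∃ a, Isolated3 (fn 5 4 3 2 1 0) a) → cc (fn 5 4 3 2 1 0) ≠ 3 ∧ cc (fn 5 4 3 2 1 0) ≠ 2 := by decide

set_option maxRecDepth 4000 in
set_option maxHeartbeats 1000000 in
lemma ft0 : ∀ a : ZMod 6, (fn 1 0 3 2 5 4) a ≠ a + 1 →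
    z (cc (fn 1 0 3 2 5 4))
    - z (cc (conjF3 (swapF3 a (a + 1)) (swapF3 a (a + 1)) (fn 1 0 3 2 5 4)))
    + z (cc (conjF3 (slideF3 a ((fn 1 0 3 2 5 4) a)) (slideInvF3 a ((fn 1 0 3 2 5 4) a)) (fn 1 0 3 2 5 4)))
    - z (cc (conjF3 (swapF3 ((fn 1 0 3 2 5 4) a - 1) ((fn 1 0 3 2 5 4) a)) (swapF3 ((fn 1 0 3 2 5 4) a - 1) ((fn 1 0 3 2 5 4) a))
        (conjF3 (slideF3 a ((fn 1 0 3 2 5 4) a)) (slideInvF3 a ((fn 1 0 3 2 5 4) a)) (fn 1 0 3 2 5 4)))) = 0 := by decide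

set_option maxRecDepth 4000 in
set_option maxHeartbeats 1000000 in
lemma ft1 : ∀ a : ZMod 6, (fn 1 0 4 5 2 3) a ≠ a + 1 →
    z (cc (fn 1 0 4 5 2 3))
    - z (cc (conjF3 (swapF3 a (a + 1)) (swapF3 a (a + 1)) (fn 1 0 4 5 2 3)))
    + z (cc (conjF3 (slideF3 a ((fn 1 0 4 5 2 3) a)) (slideInvF3 a ((fn 1 0 4 5 2 3) a)) (fn 1 0 4 5 2 3)))
    - z (cc (conjF3 (swapF3 ((fn 1 0 4 5 2 3) a - 1) ((fn 1 0 4 5 2 3) a)) (swapF3 ((fn 1 0 4 5 2 3) a - 1) ((fn 1 0 4 5 2 3) a))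
        (conjF3 (slideF3 a ((fn 1 0 4 5 2 3) a)) (slideInvF3 a ((fn 1 0 4 5 2 3) a)) (fn 1 0 4 5 2 3)))) = 0 := by decide

set_option maxRecDepth 4000 in
set_option maxHeartbeats 1000000 in
lemma ft2 : ∀ a : ZMod 6, (fn 1 0 5 4 3 2) a ≠ a + 1 →
    z (cc (fn 1 0 5 4 3 2))
    - z (cc (conjF3 (swapF3 a (a + 1)) (swapF3 a (a + 1)) (fn 1 0 5 4 3 2)))
    + z (cc (conjF3 (slideF3 a ((fn 1 0 5 4 3 2) a)) (slideInvF3 a ((fn 1 0 5 4 3 2) a)) (fn 1 0 5 4 3 2)))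
    - z (cc (conjF3 (swapF3 ((fn 1 0 5 4 3 2) a - 1) ((fn 1 0 5 4 3 2) a)) (swapF3 ((fn 1 0 5 4 3 2) a - 1) ((fn 1 0 5 4 3 2) a))
        (conjF3 (slideF3 a ((fn 1 0 5 4 3 2) a)) (slideInvF3 a ((fn 1 0 5 4 3 2) a)) (fn 1 0 5 4 3 2)))) = 0 := by decide

set_option maxRecDepth 4000 in
set_option maxHeartbeats 1000000 in
lemma ft3 : ∀ a : ZMod 6, (fn 2 3 0 1 5 4) a ≠ a + 1 →
    z (cc (fn 2 3 0 1 5 4))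
    - z (cc (conjF3 (swapF3 a (a + 1)) (swapF3 a (a + 1)) (fn 2 3 0 1 5 4)))
    + z (cc (conjF3 (slideF3 a ((fn 2 3 0 1 5 4) a)) (slideInvF3 a ((fn 2 3 0 1 5 4) a)) (fn 2 3 0 1 5 4)))
    - z (cc (conjF3 (swapF3 ((fn 2 3 0 1 5 4) a - 1) ((fn 2 3 0 1 5 4) a)) (swapF3 ((fn 2 3 0 1 5 4) a - 1) ((fn 2 3 0 1 5 4) a))
        (conjF3 (slideF3 a ((fn 2 3 0 1 5 4) a)) (slideInvF3 a ((fn 2 3 0 1 5 4) a)) (fn 2 3 0 1 5 4)))) = 0 := by decide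

set_option maxRecDepth 4000 in
set_option maxHeartbeats 1000000 in
lemma ft4 : ∀ a : ZMod 6, (fn 2 4 0 5 1 3) a ≠ a + 1 →
    z (cc (fn 2 4 0 5 1 3))
    - z (cc (conjF3 (swapF3 a (a + 1)) (swapF3 a (a + 1)) (fn 2 4 0 5 1 3)))
    + z (cc (conjF3 (slideF3 a ((fn 2 4 0 5 1 3) a)) (slideInvF3 a ((fn 2 4 0 5 1 3) a)) (fn 2 4 0 5 1 3)))
    - z (cc (conjF3 (swapF3 ((fn 2 4 0 5 1 3) a - 1) ((fn 2 4 0 5 1 3) a)) (swapF3 ((fn 2 4 0 5 1 3) a - 1) ((fn 2 4 0 5 1 3) a))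
        (conjF3 (slideF3 a ((fn 2 4 0 5 1 3) a)) (slideInvF3 a ((fn 2 4 0 5 1 3) a)) (fn 2 4 0 5 1 3)))) = 0 := by decide

set_option maxRecDepth 4000 in
set_option maxHeartbeats 1000000 in
lemma ft5 : ∀ a : ZMod 6, (fn 2 5 0 4 3 1) a ≠ a + 1 →
    z (cc (fn 2 5 0 4 3 1))
    - z (cc (conjF3 (swapF3 a (a + 1)) (swapF3 a (a + 1)) (fn 2 5 0 4 3 1)))
    + z (cc (conjF3 (slideF3 a ((fn 2 5 0 4 3 1) a)) (slideInvF3 a ((fn 2 5 0 4 3 1) a)) (fn 2 5 0 4 3 1)))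
    - z (cc (conjF3 (swapF3 ((fn 2 5 0 4 3 1) a - 1) ((fn 2 5 0 4 3 1) a)) (swapF3 ((fn 2 5 0 4 3 1) a - 1) ((fn 2 5 0 4 3 1) a))
        (conjF3 (slideF3 a ((fn 2 5 0 4 3 1) a)) (slideInvF3 a ((fn 2 5 0 4 3 1) a)) (fn 2 5 0 4 3 1)))) = 0 := by decide

set_option maxRecDepth 4000 in
set_option maxHeartbeats 1000000 in
lemma ft6 : ∀ a : ZMod 6, (fn 3 2 1 0 5 4) a ≠ a + 1 →
    z (cc (fn 3 2 1 0 5 4))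
    - z (cc (conjF3 (swapF3 a (a + 1)) (swapF3 a (a + 1)) (fn 3 2 1 0 5 4)))
    + z (cc (conjF3 (slideF3 a ((fn 3 2 1 0 5 4) a)) (slideInvF3 a ((fn 3 2 1 0 5 4) a)) (fn 3 2 1 0 5 4)))
    - z (cc (conjF3 (swapF3 ((fn 3 2 1 0 5 4) a - 1) ((fn 3 2 1 0 5 4) a)) (swapF3 ((fn 3 2 1 0 5 4) a - 1) ((fn 3 2 1 0 5 4) a))
        (conjF3 (slideF3 a ((fn 3 2 1 0 5 4) a)) (slideInvF3 a ((fn 3 2 1 0 5 4) a)) (fn 3 2 1 0 5 4)))) = 0 := by decide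

set_option maxRecDepth 4000 in
set_option maxHeartbeats 1000000 in
lemma ft7 : ∀ a : ZMod 6, (fn 3 4 5 0 1 2) a ≠ a + 1 →
    z (cc (fn 3 4 5 0 1 2))
    - z (cc (conjF3 (swapF3 a (a + 1)) (swapF3 a (a + 1)) (fn 3 4 5 0 1 2)))
    + z (cc (conjF3 (slideF3 a ((fn 3 4 5 0 1 2) a)) (slideInvF3 a ((fn 3 4 5 0 1 2) a)) (fn 3 4 5 0 1 2)))
    - z (cc (conjF3 (swapF3 ((fn 3 4 5 0 1 2) a - 1) ((fn 3 4 5 0 1 2) a)) (swapF3 ((fn 3 4 5 0 1 2) a - 1) ((fn 3 4 5 0 1 2) a))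
        (conjF3 (slideF3 a ((fn 3 4 5 0 1 2) a)) (slideInvF3 a ((fn 3 4 5 0 1 2) a)) (fn 3 4 5 0 1 2)))) = 0 := by decide

set_option maxRecDepth 4000 in
set_option maxHeartbeats 1000000 in
lemma ft8 : ∀ a : ZMod 6, (fn 3 5 4 0 2 1) a ≠ a + 1 →
    z (cc (fn 3 5 4 0 2 1))
    - z (cc (conjF3 (swapF3 a (a + 1)) (swapF3 a (a + 1)) (fn 3 5 4 0 2 1)))
    + z (cc (conjF3 (slideF3 a ((fn 3 5 4 0 2 1) a)) (slideInvF3 a ((fn 3 5 4 0 2 1) a)) (fn 3 5 4 0 2 1)))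
    - z (cc (conjF3 (swapF3 ((fn 3 5 4 0 2 1) a - 1) ((fn 3 5 4 0 2 1) a)) (swapF3 ((fn 3 5 4 0 2 1) a - 1) ((fn 3 5 4 0 2 1) a))
        (conjF3 (slideF3 a ((fn 3 5 4 0 2 1) a)) (slideInvF3 a ((fn 3 5 4 0 2 1) a)) (fn 3 5 4 0 2 1)))) = 0 := by decide

set_option maxRecDepth 4000 in
set_option maxHeartbeats 1000000 in
lemma ft9 : ∀ a : ZMod 6, (fn 4 2 1 5 0 3) a ≠ a + 1 →
    z (cc (fn 4 2 1 5 0 3))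
    - z (cc (conjF3 (swapF3 a (a + 1)) (swapF3 a (a + 1)) (fn 4 2 1 5 0 3)))
    + z (cc (conjF3 (slideF3 a ((fn 4 2 1 5 0 3) a)) (slideInvF3 a ((fn 4 2 1 5 0 3) a)) (fn 4 2 1 5 0 3)))
    - z (cc (conjF3 (swapF3 ((fn 4 2 1 5 0 3) a - 1) ((fn 4 2 1 5 0 3) a)) (swapF3 ((fn 4 2 1 5 0 3) a - 1) ((fn 4 2 1 5 0 3) a))
        (conjF3 (slideF3 a ((fn 4 2 1 5 0 3) a)) (slideInvF3 a ((fn 4 2 1 5 0 3) a)) (fn 4 2 1 5 0 3)))) = 0 := by decide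

set_option maxRecDepth 4000 in
set_option maxHeartbeats 1000000 in
lemma ft10 : ∀ a : ZMod 6, (fn 4 3 5 1 0 2) a ≠ a + 1 →
    z (cc (fn 4 3 5 1 0 2))
    - z (cc (conjF3 (swapF3 a (a + 1)) (swapF3 a (a + 1)) (fn 4 3 5 1 0 2)))
    + z (cc (conjF3 (slideF3 a ((fn 4 3 5 1 0 2) a)) (slideInvF3 a ((fn 4 3 5 1 0 2) a)) (fn 4 3 5 1 0 2)))
    - z (cc (conjF3 (swapF3 ((fn 4 3 5 1 0 2) a - 1) ((fn 4 3 5 1 0 2) a)) (swapF3 ((fn 4 3 5 1 0 2) a - 1) ((fn 4 3 5 1 0 2) a))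
        (conjF3 (slideF3 a ((fn 4 3 5 1 0 2) a)) (slideInvF3 a ((fn 4 3 5 1 0 2) a)) (fn 4 3 5 1 0 2)))) = 0 := by decide

set_option maxRecDepth 4000 in
set_option maxHeartbeats 1000000 in
lemma ft11 : ∀ a : ZMod 6, (fn 4 5 3 2 0 1) a ≠ a + 1 →
    z (cc (fn 4 5 3 2 0 1))
    - z (cc (conjF3 (swapF3 a (a + 1)) (swapF3 a (a + 1)) (fn 4 5 3 2 0 1)))
    + z (cc (conjF3 (slideF3 a ((fn 4 5 3 2 0 1) a)) (slideInvF3 a ((fn 4 5 3 2 0 1) a)) (fn 4 5 3 2 0 1)))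
    - z (cc (conjF3 (swapF3 ((fn 4 5 3 2 0 1) a - 1) ((fn 4 5 3 2 0 1) a)) (swapF3 ((fn 4 5 3 2 0 1) a - 1) ((fn 4 5 3 2 0 1) a))
        (conjF3 (slideF3 a ((fn 4 5 3 2 0 1) a)) (slideInvF3 a ((fn 4 5 3 2 0 1) a)) (fn 4 5 3 2 0 1)))) = 0 := by decide

set_option maxRecDepth 4000 in
set_option maxHeartbeats 1000000 in
lemma ft12 : ∀ a : ZMod 6, (fn 5 2 1 4 3 0) a ≠ a + 1 →
    z (cc (fn 5 2 1 4 3 0))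
    - z (cc (conjF3 (swapF3 a (a + 1)) (swapF3 a (a + 1)) (fn 5 2 1 4 3 0)))
    + z (cc (conjF3 (slideF3 a ((fn 5 2 1 4 3 0) a)) (slideInvF3 a ((fn 5 2 1 4 3 0) a)) (fn 5 2 1 4 3 0)))
    - z (cc (conjF3 (swapF3 ((fn 5 2 1 4 3 0) a - 1) ((fn 5 2 1 4 3 0) a)) (swapF3 ((fn 5 2 1 4 3 0) a - 1) ((fn 5 2 1 4 3 0) a))
        (conjF3 (slideF3 a ((fn 5 2 1 4 3 0) a)) (slideInvF3 a ((fn 5 2 1 4 3 0) a)) (fn 5 2 1 4 3 0)))) = 0 := by decide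

set_option maxRecDepth 4000 in
set_option maxHeartbeats 1000000 in
lemma ft13 : ∀ a : ZMod 6, (fn 5 3 4 1 2 0) a ≠ a + 1 →
    z (cc (fn 5 3 4 1 2 0))
    - z (cc (conjF3 (swapF3 a (a + 1)) (swapF3 a (a + 1)) (fn 5 3 4 1 2 0)))
    + z (cc (conjF3 (slideF3 a ((fn 5 3 4 1 2 0) a)) (slideInvF3 a ((fn 5 3 4 1 2 0) a)) (fn 5 3 4 1 2 0)))
    - z (cc (conjF3 (swapF3 ((fn 5 3 4 1 2 0) a - 1) ((fn 5 3 4 1 2 0) a)) (swapF3 ((fn 5 3 4 1 2 0) a - 1) ((fn 5 3 4 1 2 0) a))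
        (conjF3 (slideF3 a ((fn 5 3 4 1 2 0) a)) (slideInvF3 a ((fn 5 3 4 1 2 0) a)) (fn 5 3 4 1 2 0)))) = 0 := by decide

set_option maxRecDepth 4000 in
set_option maxHeartbeats 1000000 in
lemma ft14 : ∀ a : ZMod 6, (fn 5 4 3 2 1 0) a ≠ a + 1 →
    z (cc (fn 5 4 3 2 1 0))
    - z (cc (conjF3 (swapF3 a (a + 1)) (swapF3 a (a + 1)) (fn 5 4 3 2 1 0)))
    + z (cc (conjF3 (slideF3 a ((fn 5 4 3 2 1 0) a)) (slideInvF3 a ((fn 5 4 3 2 1 0) a)) (fn 5 4 3 2 1 0)))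
    - z (cc (conjF3 (swapF3 ((fn 5 4 3 2 1 0) a - 1) ((fn 5 4 3 2 1 0) a)) (swapF3 ((fn 5 4 3 2 1 0) a - 1) ((fn 5 4 3 2 1 0) a))
        (conjF3 (slideF3 a ((fn 5 4 3 2 1 0) a)) (slideInvF3 a ((fn 5 4 3 2 1 0) a)) (fn 5 4 3 2 1 0)))) = 0 := by decide

theorem W3_is_weight_system' : OneTerm3 W3 ∧ FourTerm3 W3 := by
  constructor
  · intro f hm ha
    have hz : cc f ≠ 3 ∧ cc f ≠ 2 := by
      rcases classify f hm with rfl|rfl|rfl|rfl|rfl|rfl|rfl|rfl|rfl|rfl|rfl|rfl|rfl|rfl|rfl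
      exacts [ot0 ha, ot1 ha, ot2 ha, ot3 ha, ot4 ha, ot5 ha, ot6 ha, ot7 ha,
        ot8 ha, ot9 ha, ot10 ha, ot11 ha, ot12 ha, ot13 ha, ot14 ha]
    rw [W3_eq, z, if_neg hz.1, if_neg hz.2]
    norm_num
  · intro f a hm hne
    have hz : z (cc f)
        - z (cc (conjF3 (swapF3 a (a + 1)) (swapF3 a (a + 1)) f))
        + z (cc (conjF3 (slideF3 a (f a)) (slideInvF3 a (f a)) f))
        - z (cc (conjF3 (swapF3 (f a - 1) (f a)) (swapF3 (f a - 1) (f a))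
            (conjF3 (slideF3 a (f a)) (slideInvF3 a (f a)) f))) = 0 := by
      rcases classify f hm with rfl|rfl|rfl|rfl|rfl|rfl|rfl|rfl|rfl|rfl|rfl|rfl|rfl|rfl|rfl
      exacts [ft0 a hne, ft1 a hne, ft2 a hne, ft3 a hne, ft4 a hne, ft5 a hne,
        ft6 a hne, ft7 a hne, ft8 a hne, ft9 a hne, ft10 a hne, ft11 a hne,
        ft12 a hne, ft13 a hne, ft14 a hne]
    rw [W3_eq, W3_eq, W3_eq, W3_eq]
    exact_mod_cast congrArg (fun t : ℤ => (t : ℚ)) hz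

/-- `W₃` satisfies the 1-term and 4-term relations, i.e. it is a
weight system of degree 3. -/
theorem W3_is_weight_system : OneTerm3 W3 ∧ FourTerm3 W3 :=
  W3_is_weight_system'
end

section
/- The space of weight systems of degree 3 (linear functionals on degree-3 chord diagrams satisfying the 1-term and 4-term relations) is one-dimensional; every such weight system is a scalar multiple of W_3, which takes value 2 on the fully crossing triple, 1 on the chain diagram, and 0 otherwise. -/
-- Diagrams are written as `![f 0, …, f 5]`. The chains are the three rotations of one diagram;
-- each `crossedPair` consists of two crossing chords and an isolated chord.
def chainA : ZMod 6 → ZMod 6 := ![2, 4, 0, 5, 1, 3]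
def chainB : ZMod 6 → ZMod 6 := ![3, 5, 4, 0, 2, 1]
def chainC : ZMod 6 → ZMod 6 := ![4, 3, 5, 1, 0, 2]
def fullyCrossed : ZMod 6 → ZMod 6 := ![3, 4, 5, 0, 1, 2]

def crossedPairA : ZMod 6 → ZMod 6 := ![1, 0, 4, 5, 2, 3]
def crossedPairB : ZMod 6 → ZMod 6 := ![2, 3, 0, 1, 5, 4]
def crossedPairC : ZMod 6 → ZMod 6 := ![2, 5, 0, 4, 3, 1]

/-- Matchings are involutions, hence permutations: statements about all matchings can be decided
over the `6!` permutations of the circle rather than the `6⁶` self-maps. -/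
theorem IsMatching3.exists_perm {f : ZMod 6 → ZMod 6} (hf : IsMatching3 f) :
    ∃ σ : Equiv.Perm (ZMod 6), ⇑σ = f :=
  ⟨Function.Involutive.toPerm f hf.1, rfl⟩

theorem IsMatching3.isolated_or_eq {f : ZMod 6 → ZMod 6} (hf : IsMatching3 f) :
    (∃ a, Isolated3 f a) ∨ f = chainA ∨ f = chainB ∨ f = chainC ∨ f = fullyCrossed := by
  obtain ⟨σ, rfl⟩ := hf.exists_perm
  revert σ
  decide +kernel

-- The classical `Decidable` instances of `crossCount3` replaced by computable ones, for `decide`.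
theorem crossCount3_eq_card_filter (f : ZMod 6 → ZMod 6) :
    crossCount3 f = (Finset.univ.filter (fun p : ZMod 6 × ZMod 6 =>
      p.1.val < (f p.1).val ∧ p.2.val < (f p.2).val ∧ p.1.val < p.2.val ∧
        Crossed3 f p.1 p.2)).card := by
  unfold crossCount3
  rw [Finset.filter_congr_decidable]

theorem IsMatching3.crossCount3_le_one_of_isolated {f : ZMod 6 → ZMod 6} (hf : IsMatching3 f)
    (hiso : ∃ a, Isolated3 f a) : crossCount3 f ≤ 1 := by
  obtain ⟨σ, rfl⟩ := hf.exists_perm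
  rw [crossCount3_eq_card_filter]
  revert σ
  decide +kernel

theorem oneTerm3_W3 : OneTerm3 W3 := fun f hf hiso => by
  have := hf.crossCount3_le_one_of_isolated hiso
  rw [W3, if_neg (by omega), if_neg (by omega)]

theorem W3_chain : W3 chainA = 1 ∧ W3 chainB = 1 ∧ W3 chainC = 1 := by
  simp only [W3, crossCount3_eq_card_filter]
  decide

theorem W3_fullyCrossed : W3 fullyCrossed = 2 := by
  simp only [W3, crossCount3_eq_card_filter]
  decide

theorem FourTerm3.relation_of_eq {W : (ZMod 6 → ZMod 6) → ℚ} (h4 : FourTerm3 W)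
    (f : ZMod 6 → ZMod 6) (a : ZMod 6) (hf : IsMatching3 f) (ha : f a ≠ a + 1)
    {g₁ g₂ g₃ : ZMod 6 → ZMod 6}
    (h₁ : conjF3 (swapF3 a (a + 1)) (swapF3 a (a + 1)) f = g₁)
    (h₂ : conjF3 (slideF3 a (f a)) (slideInvF3 a (f a)) f = g₂)
    (h₃ : conjF3 (swapF3 (f a - 1) (f a)) (swapF3 (f a - 1) (f a)) g₂ = g₃) :
    W f - W g₁ + W g₂ - W g₃ = 0 := by
  subst h₁ h₂ h₃
  exact h4 f a hf ha

section WeightSystem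

variable {W : (ZMod 6 → ZMod 6) → ℚ}

theorem FourTerm3.apply_chainB (h4 : FourTerm3 W) : W chainB = W chainA := by
  have := h4.relation_of_eq crossedPairA 1 (by decide) (by decide) (g₁ := chainA) (g₂ := chainB)
    (g₃ := crossedPairA) (by decide) (by decide) (by decide)
  linarith

theorem FourTerm3.apply_chainC (h4 : FourTerm3 W) : W chainC = W chainA := by
  have := h4.relation_of_eq crossedPairB 5 (by decide) (by decide) (g₁ := chainC) (g₂ := chainA)
    (g₃ := crossedPairB) (by decide) (by decide) (by decide)
  linarith

theorem apply_fullyCrossed (h1 : OneTerm3 W) (h4 : FourTerm3 W) :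
    W fullyCrossed = 2 * W chainA := by
  have := h4.relation_of_eq fullyCrossed 0 (by decide) (by decide) (g₁ := chainC)
    (g₂ := crossedPairC) (g₃ := chainB) (by decide) (by decide) (by decide)
  have hpair : W crossedPairC = 0 := h1 _ (by decide) (by decide)
  linarith [h4.apply_chainB, h4.apply_chainC]

end WeightSystem

/-- the space of weight systems of degree 3 is one-dimensional:
every linear functional on degree-3 chord diagrams satisfying the 1-term and
4-term relations is a scalar multiple of `W₃` (which takes value 2 on the fully
crossing triple, 1 on the chain diagram and 0 otherwise). -/
theorem degree_three_weight_systems_one_dimensional :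
    ∀ W : (ZMod 6 → ZMod 6) → ℚ, OneTerm3 W → FourTerm3 W →
      ∃ c : ℚ, ∀ f, IsMatching3 f → W f = c * W3 f := by
  intro W h1 h4
  obtain ⟨hA, hB, hC⟩ := W3_chain
  refine ⟨W chainA, fun f hf => ?_⟩
  rcases hf.isolated_or_eq with hiso | rfl | rfl | rfl | rfl
  · rw [h1 f hf hiso, oneTerm3_W3 f hf hiso, mul_zero]
  · rw [hA, mul_one]
  · rw [hB, mul_one, h4.apply_chainB]
  · rw [hC, mul_one, h4.apply_chainC]
  · rw [W3_fullyCrossed, apply_fullyCrossed h1 h4, mul_comm]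
end

section
/- If V is a Vassiliev invariant of degree ≤ n (its extension to singular knots vanishes on all knots with n+1 double points), then the function W on singular knots with exactly n double points given by the extension of V depends only on the chord diagram of the singular knot (it is unchanged under crossing changes of the diagram). -/
/-- An abstract theory of singular knots: a type of singular knots with `n`
double points for each `n` (knots for `n = 0`), together with the positive and
negative resolutions of a chosen double point. -/
structure SingularKnotTheory where
  Sing : ℕ → Type
  resPos : ∀ {n}, Sing (n + 1) → Sing n
  resNeg : ∀ {n}, Sing (n + 1) → Sing n

/-- The extension of a knot invariant `V` to singular knots by the Vassiliev
skein relation `V(double point) = V(positive resolution) - V(negative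
resolution)`. -/
def SingularKnotTheory.ext (T : SingularKnotTheory) (V : T.Sing 0 → ℚ) :
    ∀ n, T.Sing n → ℚ
  | 0, K => V K
  | n + 1, K => T.ext V n (T.resPos K) - T.ext V n (T.resNeg K)

/-- A crossing change from `K` to `K'` is modelled by a singular knot `L` with one more
double point whose two resolutions are `K` and `K'`. -/
theorem weight_system_depends_only_on_chord_diagram
    (T : SingularKnotTheory) (V : T.Sing 0 → ℚ) (n : ℕ)
    (hdeg : ∀ L : T.Sing (n + 1), T.ext V (n + 1) L = 0)
    (K K' : T.Sing n) (L : T.Sing (n + 1))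
    (hK : T.resPos L = K) (hK' : T.resNeg L = K') :
    T.ext V n K = T.ext V n K' := by
  subst hK hK'
  exact sub_eq_zero.mp (hdeg L)
end
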